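/- Let R_0 = B_2 B_3 ⋯ B_n, with B_c = (c−1)(c−2)⋯1, be the staircase reduced word for the longest element w_0 ∈ S_n. For 1 ≤ a < c ≤ n, let R_0^{(a,c)} be the word obtained from R_0 by deleting the a-th letter of the block B_c (which equals c−a), and set v_{a,c} = Dem(R_0^{(a,c)}). Then the one-line notation of v_{a,c} is n (n−1) ⋯ (c+1) (c−1)(c−2)⋯a c (a−1)(a−2)⋯1; equivalently w_0 = γ·v_{a,c}, where γ ∈ S_n is the cycle with γ(t) = t+1 for a ≤ t < c, γ(c) = a, and γ(t) = t otherwise. Consequently Supp(v_{a,c}) = {a, a+1, …, c}, Fwd(v_{a,c}) = {a, a+1, …, c−1}, and Bwd(v_{a,c}) = {c}. -/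

import Mathlib

open scoped Classical

namespace BSDist

/-- The simple transposition `s i` (1-indexed): it swaps the values `i` and `i+1`
of `{1,…,n}`, i.e. the elements `i-1` and `i` of `Fin n`.  Out-of-range letters
give the identity. -/
def sTr (n : ℕ) (i : ℕ) : Equiv.Perm (Fin n) :=
  if h : 1 ≤ i ∧ i < n then Equiv.swap ⟨i - 1, by omega⟩ ⟨i, h.2⟩ else 1

/-- The product `w(R) = s_{i₁} ⋯ s_{i_L}` of a word. -/
def wprod (n : ℕ) (R : List ℕ) : Equiv.Perm (Fin n) := (R.map (sTr n)).prod

/-- The Coxeter length of a permutation: its number of inversions. -/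
def len {n : ℕ} (w : Equiv.Perm (Fin n)) : ℕ :=
  (Finset.univ.filter (fun p : Fin n × Fin n => p.1 < p.2 ∧ w p.2 < w p.1)).card

/-- A word over the alphabet `{1,…,n-1}`. -/
def Alphabet (n : ℕ) (R : List ℕ) : Prop := ∀ i ∈ R, 1 ≤ i ∧ i < n

/-- `R` is a reduced word (over the alphabet `{1,…,n-1}`). -/
def IsReducedWord (n : ℕ) (R : List ℕ) : Prop :=
  Alphabet n R ∧ R.length = len (wprod n R)

/-- `R` is a reduced word for `w`. -/
def IsReducedWordFor (n : ℕ) (R : List ℕ) (w : Equiv.Perm (Fin n)) : Prop :=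
  IsReducedWord n R ∧ wprod n R = w

/-- The weight `wt_R : S_n → ℤ[q]`, defined by the recursion
`wt_∅(e) = 1`, `wt_∅(x) = 0` for `x ≠ e`, and for an appended letter `i`:
`wt_{Ri}(x) = wt_R(x) + wt_R(x sᵢ)` if `ℓ(x sᵢ) > ℓ(x)`, and
`wt_{Ri}(x) = q·wt_R(x) + q·wt_R(x sᵢ)` if `ℓ(x sᵢ) < ℓ(x)`. -/
noncomputable def wt (n : ℕ) (R : List ℕ) : Equiv.Perm (Fin n) → Polynomial ℤ :=
  R.foldl
    (fun f i x =>
      if len x < len (x * sTr n i) then f x + f (x * sTr n i)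
      else Polynomial.X * f x + Polynomial.X * f (x * sTr n i))
    (fun x => if x = 1 then 1 else 0)

/-- A single commutation move: replace a consecutive factor `ij` by `ji` where
`|i - j| > 1`. -/
def CommMove (R R' : List ℕ) : Prop :=
  ∃ (A B : List ℕ) (i j : ℕ), (i + 1 < j ∨ j + 1 < i) ∧
    R = A ++ [i, j] ++ B ∧ R' = A ++ [j, i] ++ B

/-- Commutation equivalence: a finite sequence of commutation moves. -/
def CommEquiv (R R' : List ℕ) : Prop := Relation.ReflTransGen CommMove R R'

/-- A single braid move: replace a consecutive factor `k(k+1)k` by `(k+1)k(k+1)`. -/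
def BraidMove (R R' : List ℕ) : Prop :=
  ∃ (A B : List ℕ) (k : ℕ),
    R = A ++ [k, k + 1, k] ++ B ∧ R' = A ++ [k + 1, k, k + 1] ++ B

/-- The Demazure product of a word, computed left to right:
`w ∗ sᵢ = w sᵢ` if `ℓ(w sᵢ) > ℓ(w)`, and `w ∗ sᵢ = w` otherwise. -/
def dem (n : ℕ) (R : List ℕ) : Equiv.Perm (Fin n) :=
  R.foldl (fun w i => if len w < len (w * sTr n i) then w * sTr n i else w) 1

/-- `app w t` is the value `w(t)` in 1-indexed one-line notation:
positions and values both run through `{1,…,n}`. -/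
def app {n : ℕ} (w : Equiv.Perm (Fin n)) (t : ℕ) : ℕ :=
  if h : 1 ≤ t ∧ t ≤ n then ((w ⟨t - 1, by omega⟩ : Fin n) : ℕ) + 1 else 0

/-- `posOf x t = x⁻¹(t)`, the (1-indexed) position of the value `t` in `x`. -/
def posOf {n : ℕ} (x : Equiv.Perm (Fin n)) (t : ℕ) : ℕ := app x⁻¹ t

/-- The longest element `w₀` of `S_n` (the order-reversing permutation). -/
def w0 (n : ℕ) : Equiv.Perm (Fin n) := ⟨Fin.rev, Fin.rev, Fin.rev_rev, Fin.rev_rev⟩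

/-- The value pair `(a,b)` (with `a < b`) is an inversion of `x`:
`x⁻¹(a) > x⁻¹(b)`. -/
def IsInversion {n : ℕ} (x : Equiv.Perm (Fin n)) (a b : ℕ) : Prop :=
  posOf x b < posOf x a

/-- `tau R a b` is the first time `k` at which the pair `(a,b)` is an inversion
of the prefix product `s_{i₁} ⋯ s_{i_k}`. -/
noncomputable def tau (n : ℕ) (R : List ℕ) (a b : ℕ) : ℕ :=
  sInf {k | IsInversion (wprod n (R.take k)) a b}

/-- `T_R(a,b,c) = +1` if `τ_R(a,b) < τ_R(b,c)` and `-1` otherwise. -/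
noncomputable def T (n : ℕ) (R : List ℕ) (a b c : ℕ) : ℤ :=
  if tau n R a b < tau n R b c then 1 else -1

/-- `Supp(x) = {t : pos_x(t) ≠ pos_{w₀}(t)}`. -/
noncomputable def Supp (n : ℕ) (x : Equiv.Perm (Fin n)) : Finset ℕ :=
  (Finset.Icc 1 n).filter (fun t => posOf x t ≠ posOf (w0 n) t)

/-- `Fwd(x) = {t : pos_x(t) < pos_{w₀}(t)}`. -/
noncomputable def Fwd (n : ℕ) (x : Equiv.Perm (Fin n)) : Finset ℕ :=
  (Finset.Icc 1 n).filter (fun t => posOf x t < posOf (w0 n) t)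

/-- `Bwd(x) = {t : pos_x(t) > pos_{w₀}(t)}`. -/
noncomputable def Bwd (n : ℕ) (x : Equiv.Perm (Fin n)) : Finset ℕ :=
  (Finset.Icc 1 n).filter (fun t => posOf (w0 n) t < posOf x t)

/-- `D_R(x)`: the coefficient of `q^{N-1}` in `wt_R(x)`, where `N = n(n-1)/2`. -/
noncomputable def D (n : ℕ) (R : List ℕ) (x : Equiv.Perm (Fin n)) : ℤ :=
  (wt n R x).coeff (n * (n - 1) / 2 - 1)

/-- `σ_b(x) = sign(pos_x(b) − pos_{w₀}(b)) ∈ {−1,0,+1}`. -/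
noncomputable def sigmaVal (n : ℕ) (b : ℕ) (x : Equiv.Perm (Fin n)) : ℤ :=
  Int.sign ((posOf x b : ℤ) - (posOf (w0 n) b : ℤ))

/-- `Θ_R(a,b,c) = Σ_{x : Supp(x) = [a,c]} D_R(x)·σ_b(x)`. -/
noncomputable def Theta (n : ℕ) (R : List ℕ) (a b c : ℕ) : ℤ :=
  ∑ x ∈ Finset.univ.filter (fun x : Equiv.Perm (Fin n) => Supp n x = Finset.Icc a c),
    D n R x * sigmaVal n b x

end BSDist

namespace BSDist

/-- The block `B_c = (c−1)(c−2)⋯1`. -/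
def stairBlock (c : ℕ) : List ℕ := (List.range (c - 1)).map (fun k => c - 1 - k)

/-- The staircase reduced word `R₀ = B₂ B₃ ⋯ B_n` for `w₀ ∈ S_n`. -/
def staircase (n : ℕ) : List ℕ :=
  ((List.range (n - 1)).map (fun k => stairBlock (k + 2))).flatten

lemma swap_lt {n : ℕ} (j : ℕ) (hj : j + 1 < n) {p q : Fin n} (hpq : p < q)
    (hne : ¬ ((p : ℕ) = j ∧ (q : ℕ) = j + 1)) :
    Equiv.swap (⟨j, by omega⟩ : Fin n) ⟨j+1, hj⟩ p < Equiv.swap (⟨j, by omega⟩ : Fin n) ⟨j+1, hj⟩ q := by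
  have hp := p.isLt; have hq := q.isLt
  simp only [Equiv.swap_apply_def, Fin.ext_iff, Fin.lt_iff_val_lt_val] at *
  split_ifs <;> simp_all <;> omega

lemma len_mul_swap_lt {n : ℕ} (w : Equiv.Perm (Fin n)) (j : ℕ) (hj : j + 1 < n)
    (h : w ⟨j, by omega⟩ < w ⟨j+1, hj⟩) :
    len (w * Equiv.swap (⟨j, by omega⟩ : Fin n) ⟨j+1, hj⟩) = len w + 1 := by
  classical
  set a : Fin n := ⟨j, by omega⟩
  set b : Fin n := ⟨j+1, hj⟩
  set s := Equiv.swap a b with hs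
  have hab : a < b := by simp [a, b, Fin.lt_iff_val_lt_val]
  set P := fun (x : Equiv.Perm (Fin n)) => (Finset.univ.filter (fun p : Fin n × Fin n => p.1 < p.2 ∧ x p.2 < x p.1))
  have hmem : (a, b) ∈ P (w * s) := by
    show (a, b) ∈ Finset.univ.filter _
    rw [Finset.mem_filter]
    refine ⟨Finset.mem_univ _, hab, ?_⟩
    simpa [Equiv.Perm.mul_apply, hs, Equiv.swap_apply_left, Equiv.swap_apply_right] using h
  have hnmem : (a, b) ∉ P w := by
    simp [P, hab]
    exact h.le
  have hcard : ((P (w * s)).erase (a,b)).card = ((P w).erase (a,b)).card := by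
    apply Finset.card_bij' (i := fun p _ => (s p.1, s p.2)) (j := fun p _ => (s p.1, s p.2))
    · rintro ⟨p, q⟩ hpq
      simp only [P, Finset.mem_erase, Finset.mem_filter, Finset.mem_univ, true_and, Prod.mk.injEq] at hpq ⊢
      obtain ⟨hne, h1, h2⟩ := hpq
      have hlt : s p < s q := by
        apply swap_lt j hj h1
        intro hcon
        exact hne (Prod.ext (Fin.ext hcon.1) (Fin.ext hcon.2))
      refine ⟨?_, hlt, ?_⟩
      · intro e
        rw [Prod.ext_iff] at e
        have hb : p = b := by
          have := congrArg s e.1; simpa [hs] using this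
        have ha : q = a := by
          have := congrArg s e.2; simpa [hs] using this
        rw [hb, ha] at h1
        exact absurd (h1.trans hab) (lt_irrefl _)
      · simpa [hs, Equiv.Perm.mul_apply, Equiv.swap_apply_self] using h2
    · rintro ⟨p, q⟩ hpq
      simp only [P, Finset.mem_erase, Finset.mem_filter, Finset.mem_univ, true_and, Prod.mk.injEq] at hpq ⊢
      obtain ⟨hne, h1, h2⟩ := hpq
      have hlt : s p < s q := by
        apply swap_lt j hj h1
        intro hcon
        exact hne (Prod.ext (Fin.ext hcon.1) (Fin.ext hcon.2))
      refine ⟨?_, hlt, ?_⟩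
      · intro e
        rw [Prod.ext_iff] at e
        have hb : p = b := by
          have := congrArg s e.1; simpa [hs] using this
        have ha : q = a := by
          have := congrArg s e.2; simpa [hs] using this
        rw [hb, ha] at h1
        exact absurd (h1.trans hab) (lt_irrefl _)
      · simpa [hs, Equiv.Perm.mul_apply, Equiv.swap_apply_self] using h2
    · rintro ⟨p, q⟩ _; simp [hs]
    · rintro ⟨p, q⟩ _; simp [hs]
  have e1 : (P (w * s)).card = ((P (w*s)).erase (a,b)).card + 1 := by
    rw [Finset.card_erase_of_mem hmem]
    have : 0 < (P (w*s)).card := Finset.card_pos.2 ⟨_, hmem⟩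
    omega
  have e2 : ((P w).erase (a,b)).card = (P w).card := by
    rw [Finset.erase_eq_of_notMem hnmem]
  simp only [len, P] at *
  omega

lemma sTr_eq {n : ℕ} (i : ℕ) (h1 : 1 ≤ i) (h2 : i < n) :
    sTr n i = Equiv.swap (⟨i - 1, by omega⟩ : Fin n) ⟨i, h2⟩ := by
  simp [sTr, h1, h2]

lemma len_lt_iff {n : ℕ} (w : Equiv.Perm (Fin n)) (i : ℕ) (h1 : 1 ≤ i) (h2 : i < n) :
    len w < len (w * sTr n i) ↔ w ⟨i - 1, by omega⟩ < w ⟨i, h2⟩ := by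
  obtain ⟨j, rfl⟩ : ∃ j, i = j + 1 := ⟨i - 1, by omega⟩
  have hj : j + 1 < n := h2
  rw [sTr_eq _ h1 h2]
  have hred : (⟨j + 1 - 1, by omega⟩ : Fin n) = ⟨j, by omega⟩ := by simp
  rw [hred]
  set a : Fin n := ⟨j, by omega⟩
  set b : Fin n := ⟨j+1, hj⟩
  rcases lt_trichotomy (w a) (w b) with hlt | heq | hgt
  · simp only [hlt, iff_true]
    rw [len_mul_swap_lt w j hj hlt]; omega
  · exact absurd (w.injective heq) (by simp [a, b, Fin.ext_iff])
  · simp only [not_lt.2 hgt.le, iff_false, not_lt]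
    have : (w * Equiv.swap a b) a < (w * Equiv.swap a b) b := by
      simpa [Equiv.Perm.mul_apply] using hgt
    have h' := len_mul_swap_lt (w * Equiv.swap a b) j hj this
    rw [mul_assoc, Equiv.swap_mul_self, mul_one] at h'
    omega

def mkPerm (n : ℕ) (f g : ℕ → ℕ) (hf : ∀ p, p < n → f p < n) (hg : ∀ p, p < n → g p < n)
    (hgf : ∀ p, p < n → g (f p) = p) (hfg : ∀ p, p < n → f (g p) = p) : Equiv.Perm (Fin n) :=
  ⟨fun p => ⟨f p, hf p p.isLt⟩, fun p => ⟨g p, hg p p.isLt⟩,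
   fun p => Fin.ext (hgf p p.isLt), fun p => Fin.ext (hfg p p.isLt)⟩

lemma mkPerm_apply {n : ℕ} {f g : ℕ → ℕ} {hf hg hgf hfg} (p : Fin n) :
    mkPerm n f g hf hg hgf hfg p = ⟨f p, hf p p.isLt⟩ := rfl

lemma mkPerm_inv_apply {n : ℕ} {f g : ℕ → ℕ} {hf hg hgf hfg} (p : Fin n) :
    (mkPerm n f g hf hg hgf hfg)⁻¹ p = ⟨g p, hg p p.isLt⟩ := rfl

lemma perm_ext {n : ℕ} {u v : Equiv.Perm (Fin n)}
    (h : ∀ p (hp : p < n), ((u ⟨p, hp⟩ : Fin n) : ℕ) = v ⟨p, hp⟩) : u = v := by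
  ext p
  exact h p p.isLt

/-- one-line function of the intermediate permutations -/
def Zf (a c m : ℕ) (p : ℕ) : ℕ :=
  if m ≤ p then p
  else if p < m - c then m - 1 - p
  else if p < m - a then m - 2 - p
  else if p = m - a then c - 1
  else m - 1 - p

def Zg (a c m : ℕ) (v : ℕ) : ℕ :=
  if m ≤ v then v
  else if v = c - 1 then m - a
  else if a - 1 ≤ v ∧ v ≤ c - 2 then m - 2 - v
  else m - 1 - v

def revf (m : ℕ) (p : ℕ) : ℕ := if p < m then m - 1 - p else p

def cycf (l k p : ℕ) : ℕ := if p < l ∨ k < p then p else if p = l then k else p - 1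

def cycg (l k p : ℕ) : ℕ := if p < l ∨ k < p then p else if p = k then l else p + 1

def Zperm (n a c m : ℕ) (h : 1 ≤ a ∧ a < c ∧ c ≤ m ∧ m ≤ n) : Equiv.Perm (Fin n) :=
  mkPerm n (Zf a c m) (Zg a c m)
    (by intro p hp; unfold Zf; split_ifs <;> omega)
    (by intro p hp; unfold Zg; split_ifs <;> omega)
    (by intro p hp; obtain ⟨h1, h2, h3, h4⟩ := h; unfold Zf Zg; split_ifs <;> omega)
    (by intro p hp; obtain ⟨h1, h2, h3, h4⟩ := h; unfold Zf Zg; split_ifs <;> omega)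

def revP (n m : ℕ) (h : m ≤ n) : Equiv.Perm (Fin n) :=
  mkPerm n (revf m) (revf m)
    (by intro p hp; unfold revf; split_ifs <;> omega)
    (by intro p hp; unfold revf; split_ifs <;> omega)
    (by intro p hp; unfold revf; split_ifs <;> omega)
    (by intro p hp; unfold revf; split_ifs <;> omega)

def cycP (n l k : ℕ) (hk : k < n) : Equiv.Perm (Fin n) :=
  mkPerm n (cycf l k) (cycg l k)
    (by intro p hp; unfold cycf; split_ifs <;> omega)
    (by intro p hp; unfold cycg; split_ifs <;> omega)
    (by intro p hp; unfold cycf cycg; split_ifs <;> omega)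
    (by intro p hp; unfold cycf cycg; split_ifs <;> omega)

lemma sTr_apply {n i : ℕ} (h1 : 1 ≤ i) (h2 : i < n) (p : ℕ) (hp : p < n) :
    ((sTr n i ⟨p, hp⟩ : Fin n) : ℕ) = if p = i - 1 then i else if p = i then i - 1 else p := by
  rw [sTr_eq i h1 h2, Equiv.swap_apply_def]
  simp only [Fin.mk.injEq, Fin.ext_iff]
  split_ifs <;> simp_all <;> omega

def demStep (n : ℕ) (w : Equiv.Perm (Fin n)) (i : ℕ) : Equiv.Perm (Fin n) :=
  if len w < len (w * sTr n i) then w * sTr n i else w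

def run (k l : ℕ) : List ℕ := (List.range (k + 1 - l)).map (fun t => k - t)

lemma run_nil (k l : ℕ) (h : k < l) : run k l = [] := by
  unfold run
  have : k + 1 - l = 0 := by omega
  simp [this]

lemma run_cons (k l : ℕ) (h : l ≤ k) (hl : 1 ≤ l) : run k l = k :: run (k - 1) l := by
  unfold run
  have h1 : k + 1 - l = (k - l) + 1 := by omega
  have h2 : (k - 1) + 1 - l = k - l := by omega
  rw [h1, h2, List.range_succ_eq_map, List.map_cons, List.map_map]
  simp only [Nat.sub_zero]
  congr 1
  apply List.map_congr_left
  intro t _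
  simp only [Function.comp_apply]
  omega

lemma cycP_eq_one {n l k : ℕ} (hk : k < n) (h : k ≤ l) : cycP n l k hk = 1 := by
  apply perm_ext
  intro p hp
  rw [cycP, mkPerm_apply]
  simp only [cycf, Equiv.Perm.one_apply]
  split_ifs <;> omega

lemma fold_run_asc {n : ℕ} (k : ℕ) (hk : k < n) (l : ℕ) (hl : 1 ≤ l)
    (x : Equiv.Perm (Fin n))
    (h : ∀ p (hp : p < n), l - 1 ≤ p → p < k → x ⟨p, hp⟩ < x ⟨k, hk⟩) :
    (run k l).foldl (demStep n) x = x * cycP n (l - 1) k hk := by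
  induction k using Nat.strong_induction_on generalizing x with
  | _ k IH =>
    by_cases hkl : k < l
    · rw [run_nil k l hkl, cycP_eq_one hk (by omega), mul_one]
      rfl
    · push_neg at hkl
      have hk1 : 1 ≤ k := le_trans hl hkl
      have hcond : len x < len (x * sTr n k) := by
        rw [len_lt_iff x k hk1 hk]
        exact h (k-1) (by omega) (by omega) (by omega)
      have hstep : demStep n x k = x * sTr n k := by
        rw [demStep, if_pos hcond]
      have hk' : k - 1 < n := by omega
      have harg : ∀ p (hp : p < n), l - 1 ≤ p → p < k - 1 →
          (x * sTr n k) ⟨p, hp⟩ < (x * sTr n k) ⟨k - 1, hk'⟩ := by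
        intro p hp hlp hpk
        rw [Equiv.Perm.mul_apply, Equiv.Perm.mul_apply]
        have e1 : sTr n k ⟨p, hp⟩ = ⟨p, hp⟩ := by
          apply Fin.ext
          rw [sTr_apply hk1 hk]
          show _ = p
          split_ifs <;> omega
        have e2 : sTr n k ⟨k - 1, hk'⟩ = ⟨k, hk⟩ := by
          apply Fin.ext
          rw [sTr_apply hk1 hk]
          show _ = k
          split_ifs <;> omega
        rw [e1, e2]
        exact h p hp (by omega) (by omega)
      rw [run_cons k l hkl hl, List.foldl_cons, hstep,
        IH (k-1) (by omega) hk' (x * sTr n k) harg, mul_assoc]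
      congr 1
      apply perm_ext
      intro p hp
      rw [Equiv.Perm.mul_apply, cycP, cycP, mkPerm_apply, mkPerm_apply, sTr_apply hk1 hk]
      simp only [cycf]
      split_ifs <;> omega

lemma fold_run_desc {n : ℕ} (k : ℕ) (hk : k < n) (l : ℕ) (hl : 1 ≤ l)
    (x : Equiv.Perm (Fin n))
    (h : ∀ j (hj : j < n), l ≤ j → j ≤ k → x ⟨j, hj⟩ < x ⟨j - 1, by omega⟩) :
    (run k l).foldl (demStep n) x = x := by
  induction k using Nat.strong_induction_on with
  | _ k IH =>
    by_cases hkl : k < l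
    · rw [run_nil k l hkl]
      rfl
    · push_neg at hkl
      have hk1 : 1 ≤ k := le_trans hl hkl
      have hcond : ¬ len x < len (x * sTr n k) := by
        rw [len_lt_iff x k hk1 hk]
        exact not_lt.2 (le_of_lt (h k hk (by omega) (by omega)))
      have hstep : demStep n x k = x := by
        rw [demStep, if_neg hcond]
      rw [run_cons k l hkl hl, List.foldl_cons, hstep]
      exact IH (k-1) (by omega) (by omega) (fun j hj h1 h2 => h j hj h1 (by omega))

lemma stairBlock_eq_run (c : ℕ) : stairBlock c = run (c - 1) 1 := by
  unfold stairBlock run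
  have : c - 1 + 1 - 1 = c - 1 := by omega
  rw [this]

lemma run_split (k l j : ℕ) (h1 : l ≤ j) (h2 : j ≤ k) :
    run k l = run k (j + 1) ++ run j l := by
  unfold run
  have e1 : k + 1 - (j + 1) = k - j := by omega
  have e2 : k + 1 - l = (k - j) + (j + 1 - l) := by omega
  rw [e1, e2, List.range_add, List.map_append, List.map_map]
  congr 1
  apply List.map_congr_left
  intro t ht
  simp only [Function.comp_apply]
  rw [List.mem_range] at ht
  omega

lemma eraseIdx_append_len {α : Type*} (l1 l2 : List α) (i : ℕ) :
    (l1 ++ l2).eraseIdx (l1.length + i) = l1 ++ l2.eraseIdx i := by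
  induction l1 with
  | nil => simp
  | cons a t ih => simp [List.eraseIdx_cons_succ, Nat.succ_add, ih]

def PB (j : ℕ) : List ℕ := ((List.range j).map (fun k => stairBlock (k + 2))).flatten

def SB (c j : ℕ) : List ℕ := ((List.range j).map (fun k => stairBlock (k + c + 1))).flatten

lemma PB_succ (j : ℕ) : PB (j + 1) = PB j ++ stairBlock (j + 2) := by
  unfold PB
  rw [List.range_succ, List.map_append, List.flatten_append]
  simp

lemma SB_succ (c j : ℕ) : SB c (j + 1) = SB c j ++ stairBlock (j + c + 1) := by
  unfold SB
  rw [List.range_succ, List.map_append, List.flatten_append]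
  simp

lemma PB_length (j : ℕ) : (PB j).length * 2 = j * (j + 1) := by
  induction j with
  | zero => simp [PB]
  | succ j ih =>
    rw [PB_succ, List.length_append]
    have hb : (stairBlock (j + 2)).length = j + 1 := by
      simp [stairBlock]
    have : (j + 1) * (j + 1 + 1) = j * (j + 1) + 2 * (j + 1) := by ring
    omega

lemma staircase_split (n c : ℕ) (hc : 2 ≤ c) (hcn : c ≤ n) :
    staircase n = PB (c - 2) ++ stairBlock c ++ SB c (n - c) := by
  unfold staircase PB SB
  have h1 : n - 1 = (c - 1) + (n - c) := by omega
  have h2 : c - 1 = (c - 2) + 1 := by omega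
  rw [h1, List.range_add, List.map_append, List.flatten_append, h2, List.range_succ,
    List.map_append, List.flatten_append]
  have h3 : c - 2 + 2 = c := by omega
  simp only [List.map_cons, List.map_nil, List.flatten_cons, List.flatten_nil,
    List.append_nil, List.map_map]
  rw [h3]
  simp only [List.append_assoc]
  congr 2
  congr 1
  apply List.map_congr_left
  intro t _
  simp only [Function.comp_apply]
  congr 1
  omega

lemma erased_staircase (n a c : ℕ) (ha : 1 ≤ a) (hac : a < c) (hcn : c ≤ n) :
    (staircase n).eraseIdx ((c - 1) * (c - 2) / 2 + a - 1) =
      PB (c - 2) ++ (run (c - 1) (c - a + 1) ++ (run (c - a - 1) 1 ++ SB c (n - c))) := by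
  have hc2 : 2 ≤ c := by omega
  rw [staircase_split n c hc2 hcn, stairBlock_eq_run]
  have hsplit : run (c - 1) 1 = run (c - 1) (c - a + 1) ++ run (c - a) 1 := by
    have : c - a + 1 = (c - a) + 1 := by omega
    rw [this]
    exact run_split (c - 1) 1 (c - a) (by omega) (by omega)
  have hcons : run (c - a) 1 = (c - a) :: run (c - a - 1) 1 := run_cons _ _ (by omega) le_rfl
  rw [hsplit, hcons]
  have hlenPB : (PB (c - 2)).length = (c - 1) * (c - 2) / 2 := by
    have := PB_length (c - 2)
    have h3 : (c - 2) * (c - 2 + 1) = (c - 1) * (c - 2) := by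
      have : c - 2 + 1 = c - 1 := by omega
      rw [this]; ring
    omega
  have hlenrun : (run (c - 1) (c - a + 1)).length = a - 1 := by
    simp [run]
    omega
  have hidx : (c - 1) * (c - 2) / 2 + a - 1 =
      (PB (c - 2)).length + ((run (c - 1) (c - a + 1)).length + 0) := by
    omega
  rw [List.append_assoc, List.append_assoc, hidx, eraseIdx_append_len, eraseIdx_append_len]
  simp [List.eraseIdx]

lemma fold_PB (n : ℕ) (j : ℕ) : ∀ (hj : j + 1 ≤ n),
    (PB j).foldl (demStep n) 1 = revP n (j + 1) hj := by
  induction j with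
  | zero =>
    intro hj
    have : PB 0 = [] := rfl
    rw [this, List.foldl_nil]
    apply perm_ext
    intro p hp
    rw [revP, mkPerm_apply]
    simp only [Equiv.Perm.one_apply, revf]
    split_ifs <;> omega
  | succ j ih =>
    intro hj
    rw [PB_succ, List.foldl_append, ih (by omega), stairBlock_eq_run]
    have e : j + 2 - 1 = j + 1 := by omega
    rw [e, fold_run_asc (j + 1) (by omega) 1 le_rfl _ ?harg]
    case harg =>
      intro p hp h0 hpk
      rw [revP, mkPerm_apply, mkPerm_apply, Fin.mk_lt_mk]
      simp only [revf]
      split_ifs <;> omega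
    apply perm_ext
    intro p hp
    rw [Equiv.Perm.mul_apply, cycP, revP, revP, mkPerm_apply, mkPerm_apply, mkPerm_apply]
    simp only [revf, cycf]
    split_ifs <;> omega

lemma fold_mid (n a c : ℕ) (ha : 1 ≤ a) (hac : a < c) (hcn : c ≤ n) :
    (run (c - 1) (c - a + 1)).foldl (demStep n) (revP n (c - 1) (by omega)) =
      Zperm n a c c ⟨ha, hac, le_rfl, hcn⟩ := by
  rw [fold_run_asc (c - 1) (by omega) (c - a + 1) (by omega) _ ?harg]
  case harg =>
    intro p hp h1 h2
    rw [revP, mkPerm_apply, mkPerm_apply, Fin.mk_lt_mk]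
    simp only [revf]
    split_ifs <;> omega
  apply perm_ext
  intro p hp
  rw [Equiv.Perm.mul_apply, cycP, revP, Zperm, mkPerm_apply, mkPerm_apply, mkPerm_apply]
  simp only [revf, cycf, Zf]
  split_ifs <;> omega

lemma fold_desc (n a c : ℕ) (ha : 1 ≤ a) (hac : a < c) (hcn : c ≤ n) :
    (run (c - a - 1) 1).foldl (demStep n) (Zperm n a c c ⟨ha, hac, le_rfl, hcn⟩) =
      Zperm n a c c ⟨ha, hac, le_rfl, hcn⟩ := by
  apply fold_run_desc (c - a - 1) (by omega) 1 le_rfl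
  intro j hj h1 h2
  rw [Zperm, mkPerm_apply, mkPerm_apply, Fin.mk_lt_mk]
  simp only [Zf]
  split_ifs <;> omega

set_option maxHeartbeats 1000000 in
lemma fold_SB (n a c : ℕ) (ha : 1 ≤ a) (hac : a < c) (hcn : c ≤ n) :
    ∀ j (hj : c + j ≤ n),
      (SB c j).foldl (demStep n) (Zperm n a c c ⟨ha, hac, le_rfl, hcn⟩) =
        Zperm n a c (c + j) ⟨ha, hac, by omega, hj⟩ := by
  intro j
  induction j with
  | zero => intro hj; rfl
  | succ j ih =>
    intro hj
    rw [SB_succ, List.foldl_append, ih (by omega), stairBlock_eq_run]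
    have e : j + c + 1 - 1 = c + j := by omega
    rw [e, fold_run_asc (c + j) (by omega) 1 le_rfl _ ?harg]
    case harg =>
      intro p hp h0 hpk
      rw [Zperm, mkPerm_apply, mkPerm_apply, Fin.mk_lt_mk]
      simp only [Zf]
      split_ifs <;> omega
    apply perm_ext
    intro p hp
    rw [Equiv.Perm.mul_apply, cycP, Zperm, Zperm, mkPerm_apply, mkPerm_apply, mkPerm_apply]
    simp only [Zf, cycf]
    split_ifs <;> omega

def dem' (n : ℕ) (R : List ℕ) : Equiv.Perm (Fin n) := R.foldl (demStep n) 1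

def gammaf (a c p : ℕ) : ℕ :=
  if p < a - 1 ∨ c - 1 < p then p else if p = c - 1 then a - 1 else p + 1

def gammag (a c p : ℕ) : ℕ :=
  if p < a - 1 ∨ c - 1 < p then p else if p = a - 1 then c - 1 else p - 1

def gammaP (n a c : ℕ) (h : 1 ≤ a ∧ a < c ∧ c ≤ n) : Equiv.Perm (Fin n) :=
  mkPerm n (gammaf a c) (gammag a c)
    (by intro p hp; unfold gammaf; split_ifs <;> omega)
    (by intro p hp; unfold gammag; split_ifs <;> omega)
    (by intro p hp; obtain ⟨h1, h2, h3⟩ := h; unfold gammaf gammag; split_ifs <;> omega)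
    (by intro p hp; obtain ⟨h1, h2, h3⟩ := h; unfold gammaf gammag; split_ifs <;> omega)

lemma dem'_erased (n a c : ℕ) (ha : 1 ≤ a) (hac : a < c) (hcn : c ≤ n) :
    dem' n ((staircase n).eraseIdx ((c - 1) * (c - 2) / 2 + a - 1)) =
      Zperm n a c n ⟨ha, hac, hcn, le_rfl⟩ := by
  rw [dem', erased_staircase n a c ha hac hcn, List.foldl_append, List.foldl_append,
    List.foldl_append]
  have e1 : c - 2 + 1 = c - 1 := by omega
  have h1 : (PB (c - 2)).foldl (demStep n) 1 = revP n (c - 1) (by omega) := by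
    rw [fold_PB n (c - 2) (by omega)]
    congr 1 <;> omega
  rw [h1, fold_mid n a c ha hac hcn, fold_desc n a c ha hac hcn,
    fold_SB n a c ha hac hcn (n - c) (by omega)]
  congr 1 <;> omega

set_option maxHeartbeats 1000000 in
lemma w0_eq_gamma_mul (n a c : ℕ) (h : 1 ≤ a ∧ a < c ∧ c ≤ n) :
    w0 n = gammaP n a c h * Zperm n a c n ⟨h.1, h.2.1, h.2.2, le_rfl⟩ := by
  obtain ⟨h1, h2, h3⟩ := h
  apply perm_ext
  intro p hp
  rw [Equiv.Perm.mul_apply, Zperm, gammaP, mkPerm_apply, mkPerm_apply]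
  have : ((w0 n) ⟨p, hp⟩ : ℕ) = n - (p + 1) := by
    have : (w0 n) ⟨p, hp⟩ = Fin.rev ⟨p, hp⟩ := rfl
    rw [this, Fin.val_rev]
  rw [this]
  simp only [gammaf, Zf]
  split_ifs <;> omega

lemma dem_eq_dem' (n : ℕ) (R : List ℕ) : dem n R = dem' n R := rfl

lemma posOf_w0 (n t : ℕ) (h1 : 1 ≤ t) (h2 : t ≤ n) : posOf (w0 n) t = n + 1 - t := by
  rw [posOf, app, dif_pos ⟨h1, h2⟩]
  have : ((w0 n)⁻¹ ⟨t - 1, by omega⟩ : Fin n) = Fin.rev ⟨t - 1, by omega⟩ := rfl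
  rw [this]
  simp only [Fin.val_rev]
  omega


/-- Let `R₀` be the staircase reduced word for `w₀ ∈ S_n`,
and for `1 ≤ a < c ≤ n` let `v_{a,c}` be the Demazure product of `R₀` with
the `a`-th letter of the block `B_c` (which equals `c−a`) deleted.  Then the
one-line notation of `v_{a,c}` is
`n (n−1) ⋯ (c+1) (c−1)(c−2)⋯a c (a−1)⋯1`; equivalently `w₀ = γ·v_{a,c}` for
the cycle `γ` with `γ(t) = t+1` for `a ≤ t < c`, `γ(c) = a`, `γ(t) = t`
otherwise.  Consequently `Supp(v_{a,c}) = {a,…,c}`,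
`Fwd(v_{a,c}) = {a,…,c−1}` and `Bwd(v_{a,c}) = {c}`. -/
theorem staircase_shortening_description
    (n : ℕ) (hn : 2 ≤ n) (a c : ℕ) (hac : 1 ≤ a ∧ a < c ∧ c ≤ n)
    (v : Equiv.Perm (Fin n))
    (hv : v = dem n ((staircase n).eraseIdx ((c - 1) * (c - 2) / 2 + a - 1))) :
    (∀ p : ℕ, 1 ≤ p → p ≤ n - c → app v p = n + 1 - p) ∧
    (∀ p : ℕ, n - c + 1 ≤ p → p ≤ n - a → app v p = n - p) ∧
    app v (n - a + 1) = c ∧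
    (∀ p : ℕ, n - a + 2 ≤ p → p ≤ n → app v p = n + 1 - p) ∧
    (∃ γ : Equiv.Perm (Fin n),
      (∀ t : ℕ, a ≤ t → t < c → app γ t = t + 1) ∧
      app γ c = a ∧
      (∀ t : ℕ, 1 ≤ t → t ≤ n → (t < a ∨ c < t) → app γ t = t) ∧
      w0 n = γ * v) ∧
    Supp n v = Finset.Icc a c ∧
    Fwd n v = Finset.Icc a (c - 1) ∧
    Bwd n v = {c} := by
  obtain ⟨ha, hacc, hcn⟩ := hac
  have hvz : v = Zperm n a c n ⟨ha, hacc, hcn, le_rfl⟩ := by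
    rw [hv, dem_eq_dem', dem'_erased n a c ha hacc hcn]
  have happ : ∀ p : ℕ, 1 ≤ p → p ≤ n → app v p = Zf a c n (p - 1) + 1 := by
    intro p h1 h2
    rw [hvz, app, dif_pos ⟨h1, h2⟩, Zperm, mkPerm_apply]
  have hposv : ∀ t : ℕ, 1 ≤ t → t ≤ n → posOf v t = Zg a c n (t - 1) + 1 := by
    intro t h1 h2
    rw [hvz, posOf, app, dif_pos ⟨h1, h2⟩, Zperm, mkPerm_inv_apply]
  refine ⟨?_, ?_, ?_, ?_, ?_, ?_, ?_, ?_⟩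
  · intro p h1 h2
    rw [happ p h1 (by omega)]
    simp only [Zf]
    split_ifs <;> omega
  · intro p h1 h2
    rw [happ p (by omega) (by omega)]
    simp only [Zf]
    split_ifs <;> omega
  · rw [happ (n - a + 1) (by omega) (by omega)]
    simp only [Zf]
    split_ifs <;> omega
  · intro p h1 h2
    rw [happ p (by omega) h2]
    simp only [Zf]
    split_ifs <;> omega
  · refine ⟨gammaP n a c ⟨ha, hacc, hcn⟩, ?_, ?_, ?_, ?_⟩
    · intro t h1 h2
      rw [app, dif_pos ⟨by omega, by omega⟩, gammaP, mkPerm_apply]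
      simp only [gammaf]
      split_ifs <;> omega
    · rw [app, dif_pos ⟨by omega, by omega⟩, gammaP, mkPerm_apply]
      simp only [gammaf]
      split_ifs <;> omega
    · intro t h1 h2 h3
      rw [app, dif_pos ⟨h1, h2⟩, gammaP, mkPerm_apply]
      simp only [gammaf]
      split_ifs <;> omega
    · rw [hvz]
      exact w0_eq_gamma_mul n a c ⟨ha, hacc, hcn⟩
  · ext t
    simp only [Supp, Finset.mem_filter, Finset.mem_Icc]
    constructor
    · rintro ⟨⟨h1, h2⟩, hne⟩
      rw [hposv t h1 h2, posOf_w0 n t h1 h2] at hne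
      simp only [Zg] at hne
      split_ifs at hne <;> omega
    · rintro ⟨h1', h2'⟩
      have h1 : 1 ≤ t := by omega
      have h2 : t ≤ n := by omega
      refine ⟨⟨h1, h2⟩, ?_⟩
      rw [hposv t h1 h2, posOf_w0 n t h1 h2]
      simp only [Zg]
      split_ifs <;> omega
  · ext t
    simp only [Fwd, Finset.mem_filter, Finset.mem_Icc]
    constructor
    · rintro ⟨⟨h1, h2⟩, hlt⟩
      rw [hposv t h1 h2, posOf_w0 n t h1 h2] at hlt
      simp only [Zg] at hlt
      split_ifs at hlt <;> omega
    · rintro ⟨h1', h2'⟩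
      have h1 : 1 ≤ t := by omega
      have h2 : t ≤ n := by omega
      refine ⟨⟨h1, h2⟩, ?_⟩
      rw [hposv t h1 h2, posOf_w0 n t h1 h2]
      simp only [Zg]
      split_ifs <;> omega
  · ext t
    simp only [Bwd, Finset.mem_filter, Finset.mem_Icc, Finset.mem_singleton]
    constructor
    · rintro ⟨⟨h1, h2⟩, hlt⟩
      rw [hposv t h1 h2, posOf_w0 n t h1 h2] at hlt
      simp only [Zg] at hlt
      split_ifs at hlt <;> omega
    · rintro heq
      have h1 : 1 ≤ t := by omega
      have h2 : t ≤ n := by omega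
      refine ⟨⟨h1, h2⟩, ?_⟩
      rw [hposv t h1 h2, posOf_w0 n t h1 h2]
      simp only [Zg]
      split_ifs <;> omega


end BSDist
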